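/- Let χ be a non-principal Dirichlet character modulo N, τ ∈ ℍ, z ∈ ℂ. Then h_N(z; τ, χ) - h_N(z - √N; τ, χ) = (1/√(-iτ)) Σ_{k=1}^{N-1} χ(k) e^{iπ(z - k/√N)²/τ}, where h_N(z; τ, χ) = ∫_ℝ Φ_N(x; χ) e^{πiτx² - 2πzx} dx. -/

import Mathlib

open Finset Complex

noncomputable def PhiChi (N : ℕ) (χ : DirichletCharacter ℂ N) (t : ℂ) : ℂ :=
  (∑ k ∈ Finset.Ico 1 N, χ (k : ZMod N) * Complex.exp (2 * Real.pi * k * t / Real.sqrt N)) /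
    (1 - Complex.exp (2 * Real.pi * t * Real.sqrt N))

noncomputable def hN (N : ℕ) (χ : DirichletCharacter ℂ N) (τ z : ℂ) : ℂ :=
  ∫ x : ℝ, PhiChi N χ x *
    Complex.exp (Real.pi * Complex.I * τ * x ^ 2 - 2 * Real.pi * z * x)

/-!
Multiplying `Φ_N(x)` by `1 - e^{2π√N x}` clears its denominator, and the shift `z ↦ z - √N`
multiplies the Gaussian factor `e^{πiτx² - 2πzx}` by exactly `e^{2π√N x}`. Hence the difference
of the two integrals is a finite sum of Gaussian integrals, each evaluated by completing the square.
The integrals converge because `Φ_N` is bounded on `ℝ`: since `χ ≠ 1` we have `∑ χ(k) = 0`, so the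
numerator is `∑ χ(k) (e^{ku} - 1)` with `u = 2πx/√N`, and `|e^{ku} - 1| ≤ |e^{Nu} - 1|` for `k ≤ N`.
-/

open MeasureTheory
open scoped Real

lemma sum_range_eq_sum_zmod {M : Type*} [AddCommMonoid M] (N : ℕ) [NeZero N] (f : ZMod N → M) :
    ∑ k ∈ range N, f k = ∑ a : ZMod N, f a :=
  sum_nbij' (fun k ↦ (k : ZMod N)) ZMod.val (fun _ _ ↦ mem_univ _)
    (fun a _ ↦ mem_range.mpr a.val_lt) (fun _ hk ↦ ZMod.val_cast_of_lt (mem_range.mp hk))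
    (fun a _ ↦ ZMod.natCast_zmod_val a) (fun _ _ ↦ rfl)

lemma DirichletCharacter.sum_Ico_one_eq_zero {R : Type*} [CommRing R] [IsDomain R] {N : ℕ}
    {χ : DirichletCharacter R N} (hχ : χ ≠ 1) : ∑ k ∈ Ico 1 N, χ k = 0 := by
  rcases le_or_gt N 1 with hN | hN
  · simp [Ico_eq_empty_of_le hN]
  have : Fact (1 < N) := ⟨hN⟩
  have hsum := MulChar.sum_eq_zero_of_ne_one hχ
  rwa [← sum_range_eq_sum_zmod, range_eq_Ico, sum_eq_sum_Ico_succ_bot (by omega), Nat.cast_zero,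
    χ.map_zero, zero_add] at hsum

lemma abs_exp_mul_sub_one_le_of_le {s t : ℝ} (hs : 0 ≤ s) (hst : s ≤ t) (u : ℝ) :
    |Real.exp (s * u) - 1| ≤ |Real.exp (t * u) - 1| := by
  rcases le_total 0 u with hu | hu
  · have h₁ : 1 ≤ Real.exp (s * u) := Real.one_le_exp (by positivity)
    have h₂ : Real.exp (s * u) ≤ Real.exp (t * u) := Real.exp_le_exp.mpr (by nlinarith)
    rw [abs_of_nonneg (by linarith), abs_of_nonneg (by linarith)]
    linarith
  · have h₁ : Real.exp (s * u) ≤ 1 := Real.exp_le_one_iff.mpr (by nlinarith)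
    have h₂ : Real.exp (t * u) ≤ Real.exp (s * u) := Real.exp_le_exp.mpr (by nlinarith)
    rw [abs_of_nonpos (by linarith), abs_of_nonpos (by linarith)]
    linarith

lemma norm_cexp_ofReal_sub_one (r : ℝ) : ‖cexp r - 1‖ = |Real.exp r - 1| := by
  rw [← ofReal_exp, ← ofReal_one, ← ofReal_sub, norm_real, Real.norm_eq_abs]

section PhiChi

variable {N : ℕ} {χ : DirichletCharacter ℂ N}

lemma PhiChi_mul_one_sub_exp (hχ : χ ≠ 1) (x : ℝ) :
    PhiChi N χ x * (1 - cexp (2 * π * x * √N)) =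
      ∑ k ∈ Ico 1 N, χ k * cexp (2 * π * k * x / √N) := by
  refine div_mul_cancel_of_imp fun hden ↦ ?_
  have hx : x / √N = 0 := by
    rw [sub_eq_zero, eq_comm, ← ofReal_ofNat, ← ofReal_mul, ← ofReal_mul, ← ofReal_mul,
      ← ofReal_exp, ofReal_eq_one, Real.exp_eq_one_iff] at hden
    simpa [Real.pi_ne_zero, div_eq_zero_iff] using hden
  simp_rw [mul_div_assoc, ← ofReal_div, hx, ofReal_zero, mul_zero, exp_zero, mul_one]
  exact DirichletCharacter.sum_Ico_one_eq_zero hχ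

lemma norm_PhiChi_le (hχ : χ ≠ 1) (x : ℝ) : ‖PhiChi N χ x‖ ≤ N := by
  set u : ℝ := 2 * π * x / √N
  have hnum : ∑ k ∈ Ico 1 N, χ k * cexp (2 * π * k * x / √N) =
      ∑ k ∈ Ico 1 N, χ k * (cexp (k * u : ℝ) - 1) := by
    simp_rw [mul_sub, mul_one, sum_sub_distrib, DirichletCharacter.sum_Ico_one_eq_zero hχ,
      sub_zero]
    refine sum_congr rfl fun k _ ↦ ?_
    push_cast [u]
    ring_nf
  have hden : 2 * π * x * √N = N * u := by
    rw [mul_div_assoc', mul_comm (N : ℝ), mul_div_assoc, Real.div_sqrt]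
  have hterm : ∀ k ∈ Ico 1 N, ‖χ k * (cexp (k * u : ℝ) - 1)‖ ≤ |Real.exp (N * u) - 1| := by
    intro k hk
    rw [norm_mul, norm_cexp_ofReal_sub_one]
    refine (mul_le_of_le_one_left (abs_nonneg _) (χ.norm_le_one _)).trans ?_
    exact abs_exp_mul_sub_one_le_of_le k.cast_nonneg (mod_cast (mem_Ico.mp hk).2.le) u
  rw [PhiChi, hnum, norm_div, ← ofReal_ofNat, ← ofReal_mul, ← ofReal_mul, ← ofReal_mul, hden,
    norm_sub_rev, norm_cexp_ofReal_sub_one]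
  refine div_le_of_le_mul₀ (abs_nonneg _) N.cast_nonneg ?_
  calc _ ≤ ∑ k ∈ Ico 1 N, |Real.exp (N * u) - 1| := (norm_sum_le _ _).trans (sum_le_sum hterm)
    _ ≤ N * |Real.exp (N * u) - 1| := by
      rw [sum_const, Nat.card_Ico, nsmul_eq_mul]
      gcongr
      exact_mod_cast N.sub_le 1

lemma measurable_PhiChi : Measurable (PhiChi N χ) := by
  unfold PhiChi
  fun_prop

lemma PhiChi_mul_cexp_sub_shift (hχ : χ ≠ 1) (τ z : ℂ) (x : ℝ) :
    PhiChi N χ x * cexp (π * I * τ * x ^ 2 - 2 * π * z * x) -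
        PhiChi N χ x * cexp (π * I * τ * x ^ 2 - 2 * π * (z - √N) * x) =
      ∑ k ∈ Ico 1 N, χ k * cexp (π * I * τ * x ^ 2 - 2 * π * (z - k / √N) * x) := by
  have hshift : cexp (π * I * τ * x ^ 2 - 2 * π * (z - √N) * x) =
      cexp (2 * π * x * √N) * cexp (π * I * τ * x ^ 2 - 2 * π * z * x) := by
    rw [← Complex.exp_add]; ring_nf
  calc _ = PhiChi N χ x * (1 - cexp (2 * π * x * √N)) *
        cexp (π * I * τ * x ^ 2 - 2 * π * z * x) := by rw [hshift]; ring
    _ = _ := by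
      rw [PhiChi_mul_one_sub_exp hχ, sum_mul]
      refine sum_congr rfl fun k _ ↦ ?_
      rw [mul_assoc, ← Complex.exp_add]
      ring_nf

end PhiChi

section Gaussian

variable {τ : ℂ}

lemma re_pi_mul_I_mul_lt_zero (hτ : 0 < τ.im) : (π * I * τ).re < 0 := by
  simpa using mul_pos Real.pi_pos hτ

lemma integrable_cexp_pi_I_quadratic (hτ : 0 < τ.im) (w : ℂ) :
    Integrable fun x : ℝ ↦ cexp (π * I * τ * x ^ 2 - 2 * π * w * x) := by
  simpa [sub_eq_add_neg] using
    integrable_cexp_quadratic' (re_pi_mul_I_mul_lt_zero hτ) (-(2 * π * w)) 0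

lemma integral_cexp_pi_I_quadratic (hτ : 0 < τ.im) (w : ℂ) :
    ∫ x : ℝ, cexp (π * I * τ * x ^ 2 - 2 * π * w * x) =
      1 / (-I * τ) ^ (1 / 2 : ℂ) * cexp (π * I * w ^ 2 / τ) := by
  have hτ₀ : τ ≠ 0 := by rintro rfl; simp at hτ
  have harg : (-I * τ).arg ≠ π := by
    rw [Ne, arg_eq_pi_iff, not_and_or, not_lt]
    left
    simpa using hτ.le
  have := integral_cexp_quadratic (re_pi_mul_I_mul_lt_zero hτ) (-(2 * π * w)) 0
  simp only [← sub_eq_add_neg, neg_mul, add_zero] at this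
  rw [this]
  congr 1
  · rw [show (π : ℂ) / -(π * I * τ) = (-I * τ)⁻¹ by field_simp, inv_cpow _ _ harg, ← one_div]
  · congr 1
    field_simp
    ring_nf
    rw [I_sq]
    ring

end Gaussian

theorem hN_shift_one (N : ℕ) (χ : DirichletCharacter ℂ N) (hχ : χ ≠ 1)
    (τ : ℂ) (hτ : 0 < τ.im) (z : ℂ) :
    hN N χ τ z - hN N χ τ (z - Real.sqrt N) =
      (1 / (-Complex.I * τ) ^ (1 / 2 : ℂ)) *
        ∑ k ∈ Finset.Ico 1 N, χ (k : ZMod N) *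
          Complex.exp (Real.pi * Complex.I * (z - k / Real.sqrt N) ^ 2 / τ) := by
  have hint (w : ℂ) :
      Integrable fun x : ℝ ↦ PhiChi N χ x * cexp (π * I * τ * x ^ 2 - 2 * π * w * x) :=
    (integrable_cexp_pi_I_quadratic hτ w).bdd_mul
      (measurable_PhiChi.comp measurable_ofReal).aestronglyMeasurable
      (ae_of_all _ (norm_PhiChi_le hχ))
  calc hN N χ τ z - hN N χ τ (z - √N)
      = ∫ x : ℝ, ∑ k ∈ Ico 1 N, χ k * cexp (π * I * τ * x ^ 2 - 2 * π * (z - k / √N) * x) := by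
        rw [hN, hN, ← integral_sub (hint z) (hint _)]
        exact integral_congr_ae (ae_of_all _ (PhiChi_mul_cexp_sub_shift hχ τ z))
    _ = ∑ k ∈ Ico 1 N,
          χ k * (1 / (-I * τ) ^ (1 / 2 : ℂ) * cexp (π * I * (z - k / √N) ^ 2 / τ)) := by
        rw [integral_finsetSum _ fun k _ ↦ (integrable_cexp_pi_I_quadratic hτ _).const_mul _]
        simp_rw [integral_const_mul, integral_cexp_pi_I_quadratic hτ]
    _ = _ := by
        rw [mul_sum]
        exact sum_congr rfl fun k _ ↦ mul_left_comm _ _ _
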